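/- arXiv:1805.01417 — 4 statements merged into one kernel-verified Lean document; each statement's English description precedes it below -/
import Mathlib

section
/- Let δ₁,…,δ_p > 0, let w : [0,∞) → ℝ and ξ : [0,∞) → [0,∞) be measurable, and fix indices i ≠ j. Define A = {y ∈ ℝ^p : |y_i| > |y_j|} and, for y ∈ ℝ^p, Δ_{ij}(y) = (y_i² − y_j²)(1/δ_j² − 1/δ_i²). Assume the function y ↦ (y_i² − y_j²) ξ(‖y‖)² w(√(Σ_{k=1}^p y_k²/δ_k²)) is integrable on ℝ^p, and the function y ↦ (y_i² − y_j²) ξ(‖y‖)² w(√(Σ_{k=1}^p y_k²/δ_k² + Δ_{ij}(y))) is integrable on A. Then ∫_{ℝ^p} (y_i² − y_j²) ξ(‖y‖)² w(√(Σ_k y_k²/δ_k²)) dy = ∫_A (y_i² − y_j²) ξ(‖y‖)² [ w(√(Σ_k y_k²/δ_k²)) − w(√(Σ_k y_k²/δ_k² + Δ_{ij}(y))) ] dy. -/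
/-!
The quarter turn `T : (y_i, y_j) ↦ (-y_j, y_i)` is a linear isometry, hence preserves Lebesgue
measure, and maps `A` onto `B = {|y_i| < |y_j|}`. It multiplies `y_i² - y_j²` by `-1` and adds
exactly `Δ_{ij}(y)` to `Σ_k y_k²/δ_k²`, so `F ∘ T = -G`. Since `F` vanishes on the diagonal
`|y_i| = |y_j|`, we get `∫ F = ∫_A F + ∫_B F = ∫_A F - ∫_A G`.
-/

open MeasureTheory

namespace EuclideanSpace

variable {ι : Type*} [Fintype ι] [DecidableEq ι]

noncomputable def quarterTurn (i j : ι) : EuclideanSpace ℝ ι ≃ₗᵢ[ℝ] EuclideanSpace ℝ ι :=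
  (LinearIsometryEquiv.piLpCongrLeft 2 ℝ ℝ (Equiv.swap i j)).trans
    (LinearIsometryEquiv.piLpCongrRight 2 fun k =>
      if k = i then LinearIsometryEquiv.neg ℝ else LinearIsometryEquiv.refl ℝ ℝ)

variable {i j : ι}

@[simp]
theorem quarterTurn_apply_left (y : EuclideanSpace ℝ ι) : quarterTurn i j y i = -y j := by
  simp [quarterTurn, Equiv.piCongrLeft']

@[simp]
theorem quarterTurn_apply_right (hij : i ≠ j) (y : EuclideanSpace ℝ ι) :
    quarterTurn i j y j = y i := by
  simp [quarterTurn, Equiv.piCongrLeft', hij.symm]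

theorem quarterTurn_apply_of_ne {k : ι} (hi : k ≠ i) (hj : k ≠ j) (y : EuclideanSpace ℝ ι) :
    quarterTurn i j y k = y k := by
  simp [quarterTurn, Equiv.piCongrLeft', hi, hj, Equiv.swap_apply_of_ne_of_ne]

theorem sum_quarterTurn_sq_div (hij : i ≠ j) (δ : ι → ℝ) (y : EuclideanSpace ℝ ι) :
    ∑ k, quarterTurn i j y k ^ 2 / δ k ^ 2 =
      ∑ k, y k ^ 2 / δ k ^ 2 + (y i ^ 2 - y j ^ 2) * (1 / δ j ^ 2 - 1 / δ i ^ 2) := by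
  have hdiff : ∑ k, (quarterTurn i j y k ^ 2 / δ k ^ 2 - y k ^ 2 / δ k ^ 2) =
      ∑ k ∈ {i, j}, (quarterTurn i j y k ^ 2 / δ k ^ 2 - y k ^ 2 / δ k ^ 2) := by
    refine (Finset.sum_subset (Finset.subset_univ _) fun k _ hk => ?_).symm
    simp only [Finset.mem_insert, Finset.mem_singleton, not_or] at hk
    rw [quarterTurn_apply_of_ne hk.1 hk.2, sub_self]
  rw [Finset.sum_sub_distrib, Finset.sum_pair hij, quarterTurn_apply_left,
    quarterTurn_apply_right hij] at hdiff
  linear_combination hdiff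

theorem preimage_quarterTurn_setOf_abs_lt (hij : i ≠ j) :
    quarterTurn i j ⁻¹' {y | |y i| < |y j|} = {y | |y j| < |y i|} := by
  ext y
  simp [hij]

end EuclideanSpace

open EuclideanSpace

theorem gsscm_reflection_integral_identity_general
    {p : ℕ} (δ : Fin p → ℝ)
    (w : ℝ → ℝ)
    (ξ : ℝ → ℝ)
    (i j : Fin p) (hij : i ≠ j)
    (F G : EuclideanSpace ℝ (Fin p) → ℝ)
    (hF : ∀ y, F y = (y i ^ 2 - y j ^ 2) * ξ ‖y‖ ^ 2 *
      w (Real.sqrt (∑ k, y k ^ 2 / δ k ^ 2)))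
    (hG : ∀ y, G y = (y i ^ 2 - y j ^ 2) * ξ ‖y‖ ^ 2 *
      w (Real.sqrt ((∑ k, y k ^ 2 / δ k ^ 2) +
        (y i ^ 2 - y j ^ 2) * (1 / δ j ^ 2 - 1 / δ i ^ 2))))
    (A : Set (EuclideanSpace ℝ (Fin p)))
    (hA : A = {y : EuclideanSpace ℝ (Fin p) | |y j| < |y i|})
    (hFint : Integrable F) (hGint : IntegrableOn G A) :
    ∫ y, F y = ∫ y in A, (F y - G y) := by
  set T := quarterTurn i j
  set B := {y : EuclideanSpace ℝ (Fin p) | |y i| < |y j|}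
  have hFT : ∀ y, F (T y) = -G y := fun y => by
    rw [hF, hG, T.norm_map, sum_quarterTurn_sq_div hij, quarterTurn_apply_left,
      quarterTurn_apply_right hij]
    ring
  have hA_meas : MeasurableSet A := hA ▸ measurableSet_lt (by fun_prop) (by fun_prop)
  have hcompl : ∫ y in Aᶜ, F y = ∫ y in B, F y := by
    refine setIntegral_eq_of_subset_of_forall_sdiff_eq_zero hA_meas.compl
      (fun y hy => by simpa [hA] using hy.le) fun y ⟨hyA, hyB⟩ => ?_
    have hsq : y i ^ 2 = y j ^ 2 := (sq_eq_sq_iff_abs_eq_abs _ _).2 <|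
      le_antisymm (by simpa [hA] using hyA) (by simpa [B] using hyB)
    rw [hF, hsq, sub_self, zero_mul, zero_mul]
  have hB : ∫ y in B, F y = -∫ y in A, G y := by
    rw [← T.measurePreserving.setIntegral_preimage_emb T.toHomeomorph.measurableEmbedding,
      preimage_quarterTurn_setOf_abs_lt hij, ← hA]
    simp_rw [hFT]
    exact integral_neg G
  calc ∫ y, F y = (∫ y in A, F y) + ∫ y in Aᶜ, F y := (integral_add_compl hA_meas hFint).symm
    _ = (∫ y in A, F y) - ∫ y in A, G y := by rw [hcompl, hB, sub_eq_add_neg]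
    _ = ∫ y in A, (F y - G y) := (integral_sub hFint.integrableOn hGint).symm

/-- Let `δ k > 0`, `w : [0,∞) → ℝ` and `ξ : [0,∞) → [0,∞)` measurable,
`i ≠ j`, `A = {y : |y_i| > |y_j|}`, `Δ_{ij}(y) = (y_i² − y_j²) (1/δ_j² − 1/δ_i²)`.  Under the
stated integrability assumptions,
`∫_{ℝ^p} (y_i² − y_j²) ξ(‖y‖)² w(√(Σ_k y_k²/δ_k²)) dy
  = ∫_A (y_i² − y_j²) ξ(‖y‖)² [w(√(Σ_k y_k²/δ_k²)) − w(√(Σ_k y_k²/δ_k² + Δ_{ij}(y)))] dy`. -/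
theorem gsscm_reflection_integral_identity
    {p : ℕ} (δ : Fin p → ℝ) (hδ : ∀ k, 0 < δ k)
    (w : ℝ → ℝ) (hw_meas : Measurable w)
    (ξ : ℝ → ℝ) (hξmeas : Measurable ξ) (hξnonneg : ∀ r, 0 ≤ r → 0 ≤ ξ r)
    (i j : Fin p) (hij : i ≠ j)
    (F G : EuclideanSpace ℝ (Fin p) → ℝ)
    (hF : ∀ y, F y = (y i ^ 2 - y j ^ 2) * ξ ‖y‖ ^ 2 *
      w (Real.sqrt (∑ k, y k ^ 2 / δ k ^ 2)))
    (hG : ∀ y, G y = (y i ^ 2 - y j ^ 2) * ξ ‖y‖ ^ 2 *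
      w (Real.sqrt ((∑ k, y k ^ 2 / δ k ^ 2) +
        (y i ^ 2 - y j ^ 2) * (1 / δ j ^ 2 - 1 / δ i ^ 2))))
    (A : Set (EuclideanSpace ℝ (Fin p)))
    (hA : A = {y : EuclideanSpace ℝ (Fin p) | |y j| < |y i|})
    (hFint : Integrable F) (hGint : IntegrableOn G A) :
    ∫ y, F y = ∫ y in A, (F y - G y) :=
  gsscm_reflection_integral_identity_general δ w ξ i j hij F G hF hG A hA hFint hGint
end

section
/- Let Σ be a symmetric positive definite p×p real matrix with eigenvalues λ₁,…,λ_p > 0, and let X ∼ N(0, Σ) be the corresponding multivariate Gaussian distribution on ℝ^p. Then the law of ‖X‖² (the squared Euclidean norm of X) equals the law of Σ_{i=1}^p Y_i, where Y₁,…,Y_p are independent and Y_i follows the Gamma distribution with shape parameter 1/2 and scale parameter 2λ_i (i.e., rate 1/(2λ_i)). Equivalently, the pushforward of N(0,Σ) under x ↦ ‖x‖² equals the pushforward of the product measure ⊗_{i=1}^p Gamma(1/2, rate 1/(2λ_i)) under the sum map (y₁,…,y_p) ↦ Σ_i y_i. -/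
/-!
An orthogonal change of coordinates preserves the Euclidean norm, so `‖X‖²` has the law of
`∑ Zᵢ²` with `Zᵢ ∼ N(0, λᵢ)` independent. Each `Zᵢ²` is `Gamma(1/2, 1/(2λᵢ))`: substituting
`y = x²` in the Gaussian density `φ` works because `φ(x) = |x| γ(x²)`, `γ` the Gamma density.
By independence the joint law of the `Yᵢ` is the product of these Gamma laws, and both sides
are the image of that product under the sum.
-/

open MeasureTheory ProbabilityTheory Matrix Real Set
open scoped NNReal ENNReal

lemma gaussianPDFReal_zero_eq_abs_mul_gammaPDFReal_sq {v : ℝ≥0} (hv : v ≠ 0) {x : ℝ}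
    (hx : x ≠ 0) :
    gaussianPDFReal 0 v x = |x| * gammaPDFReal (1/2) (1/(2*v)) (x ^ 2) := by
  have hv : (0 : ℝ) < v := by positivity
  have hsqrt : (x ^ 2) ^ ((1 : ℝ) / 2 - 1) = |x|⁻¹ := by
    rw [show (1 : ℝ) / 2 - 1 = -(1 / 2) by norm_num, rpow_neg (sq_nonneg x), ← sqrt_eq_rpow,
      sqrt_sq_eq_abs]
  have hrate : (1 / (2 * (v : ℝ))) ^ ((1 : ℝ) / 2) = (√(2 * v))⁻¹ := by
    rw [← sqrt_eq_rpow, one_div, sqrt_inv]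
  rw [gammaPDFReal, if_pos (sq_nonneg x), hsqrt, hrate, Gamma_one_half_eq, gaussianPDFReal_def,
    show 2 * π * v = π * (2 * v) by ring, sqrt_mul pi_pos.le]
  field_simp
  ring_nf

lemma setLIntegral_abs_two_mul_mul_comp_sq {s : Set ℝ} (hs : MeasurableSet s)
    (hinj : InjOn (· ^ 2) s) (himage : (· ^ 2) '' s = Ioi (0 : ℝ)) (H : ℝ → ℝ≥0∞) :
    ∫⁻ x in s, ENNReal.ofReal |2 * x| * H (x ^ 2) = ∫⁻ y in Ioi 0, H y := by
  rw [← himage, lintegral_image_eq_lintegral_abs_deriv_mul hs _ hinj]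
  intro x _
  simpa using (hasDerivAt_pow 2 x).hasDerivWithinAt

lemma image_sq_Ioi_zero : (· ^ 2) '' Ioi (0 : ℝ) = Ioi 0 := by
  ext y
  constructor
  · rintro ⟨x, hx, rfl⟩
    exact pow_pos (mem_Ioi.1 hx) 2
  · intro hy
    exact ⟨√y, sqrt_pos.2 hy, sq_sqrt hy.le⟩

lemma image_sq_Iio_zero : (· ^ 2) '' Iio (0 : ℝ) = Ioi 0 := by
  ext y
  constructor
  · rintro ⟨x, hx, rfl⟩
    exact sq_pos_of_neg (mem_Iio.1 hx)
  · intro hy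
    exact ⟨-√y, by simpa using hy, by simp [sq_sqrt hy.le]⟩

lemma injOn_sq_Ioi_zero : InjOn (· ^ 2) (Ioi (0 : ℝ)) :=
  fun x hx y hy h => by simp only [mem_Ioi] at h hx hy; nlinarith

lemma injOn_sq_Iio_zero : InjOn (· ^ 2) (Iio (0 : ℝ)) :=
  fun x hx y hy h => by simp only [mem_Iio] at h hx hy; nlinarith

-- Substitute `y = x²` on each half-line; each is mapped bijectively onto `(0, ∞)`.
lemma lintegral_abs_mul_comp_sq (H : ℝ → ℝ≥0∞) :
    ∫⁻ x, ENNReal.ofReal |x| * H (x ^ 2) = ∫⁻ y in Ioi 0, H y := by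
  have hdouble : ∫⁻ x, ENNReal.ofReal |2 * x| * H (x ^ 2) = 2 * ∫⁻ y in Ioi 0, H y := by
    rw [← lintegral_add_compl _ measurableSet_Iio, compl_Iio,
      setLIntegral_congr Ioi_ae_eq_Ici.symm,
      setLIntegral_abs_two_mul_mul_comp_sq measurableSet_Iio injOn_sq_Iio_zero image_sq_Iio_zero,
      setLIntegral_abs_two_mul_mul_comp_sq measurableSet_Ioi injOn_sq_Ioi_zero image_sq_Ioi_zero,
      two_mul]
  simp_rw [abs_mul, abs_two, ENNReal.ofReal_mul zero_le_two, ENNReal.ofReal_ofNat,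
    mul_assoc] at hdouble
  rwa [lintegral_const_mul' _ _ ENNReal.ofNat_ne_top,
    ENNReal.mul_right_inj two_ne_zero ENNReal.ofNat_ne_top] at hdouble

lemma indicator_preimage_sq_gaussianPDF {v : ℝ≥0} (hv : v ≠ 0) (t : Set ℝ) {x : ℝ}
    (hx : x ≠ 0) :
    ((· ^ 2) ⁻¹' t).indicator (gaussianPDF 0 v) x
      = ENNReal.ofReal |x| * t.indicator (gammaPDF (1/2) (1/(2*v))) (x ^ 2) := by
  by_cases hxt : x ^ 2 ∈ t
  · rw [indicator_of_mem hxt, indicator_of_mem (show x ∈ (· ^ 2) ⁻¹' t from hxt), gaussianPDF,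
      gammaPDF, ← ENNReal.ofReal_mul (abs_nonneg x),
      gaussianPDFReal_zero_eq_abs_mul_gammaPDFReal_sq hv hx]
  · rw [indicator_of_notMem hxt, indicator_of_notMem (show x ∉ (· ^ 2) ⁻¹' t from hxt), mul_zero]

theorem gaussianReal_map_sq {v : ℝ≥0} (hv : v ≠ 0) :
    (gaussianReal 0 v).map (· ^ 2) = gammaMeasure (1/2) (1/(2*v)) := by
  ext t ht
  calc (gaussianReal 0 v).map (· ^ 2) t
      = ∫⁻ x, ((· ^ 2) ⁻¹' t).indicator (gaussianPDF 0 v) x := by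
        rw [Measure.map_apply (by fun_prop) ht, gaussianReal_apply 0 hv,
          lintegral_indicator (measurableSet_preimage (by fun_prop) ht)]
    _ = ∫⁻ x, ENNReal.ofReal |x| * t.indicator (gammaPDF (1/2) (1/(2*v))) (x ^ 2) :=
        lintegral_congr_ae <| (Measure.ae_ne volume 0).mono fun _ hx =>
          indicator_preimage_sq_gaussianPDF hv t hx
    _ = ∫⁻ y in Ici 0, t.indicator (gammaPDF (1/2) (1/(2*v))) y := by
        rw [lintegral_abs_mul_comp_sq, setLIntegral_congr Ioi_ae_eq_Ici]
    _ = gammaMeasure (1/2) (1/(2*v)) t := by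
        rw [setLIntegral_eq_of_support_subset, lintegral_indicator ht, gammaMeasure,
          withDensity_apply _ ht]
        refine fun y hy => mem_Ici.2 <| not_lt.1 fun hneg => hy ?_
        simp [gammaPDF_of_neg hneg]

lemma map_sum_sq_pi_gaussianReal {ι : Type*} [Fintype ι] {v : ι → ℝ≥0} (hv : ∀ i, v i ≠ 0) :
    (Measure.pi fun i => gaussianReal 0 (v i)).map (fun y => ∑ i, y i ^ 2)
      = (Measure.pi fun i => gammaMeasure (1/2) (1/(2 * v i))).map (fun z => ∑ i, z i) := by
  have : ∀ i, IsProbabilityMeasure (gammaMeasure (1/2) (1/(2 * v i))) := fun i => by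
    have : (0 : ℝ) < v i := NNReal.coe_pos.2 (pos_iff_ne_zero.2 (hv i))
    exact isProbabilityMeasure_gammaMeasure (by norm_num) (by positivity)
  have hsq : ∀ i, MeasurePreserving (· ^ 2) (gaussianReal 0 (v i))
      (gammaMeasure (1/2) (1/(2 * v i))) := fun i =>
    ⟨measurable_id.pow_const 2, gaussianReal_map_sq (hv i)⟩
  rw [← (measurePreserving_pi _ _ hsq).map_eq,
    Measure.map_map (by fun_prop) (by fun_prop)]
  rfl

lemma map_sum_eq_map_sum_pi_of_iIndepFun {ι Ω : Type*} [Fintype ι] [MeasurableSpace Ω]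
    {P : Measure Ω} [IsProbabilityMeasure P] {Y : ι → Ω → ℝ} (hY : ∀ i, Measurable (Y i))
    (hindep : iIndepFun Y P) :
    P.map (fun ω => ∑ i, Y i ω) = (Measure.pi fun i => P.map (Y i)).map (fun z => ∑ i, z i) := by
  rw [← (iIndepFun_iff_map_fun_eq_pi_map fun i => (hY i).aemeasurable).1 hindep,
    Measure.map_map (by fun_prop) (by fun_prop)]
  rfl

lemma norm_sq_toLp_mulVec_of_transpose_mul_self {ι : Type*} [Fintype ι] [DecidableEq ι]
    {U : Matrix ι ι ℝ} (hU : Uᵀ * U = 1) (y : ι → ℝ) :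
    ‖WithLp.toLp 2 (U *ᵥ y)‖ ^ 2 = ∑ i, y i ^ 2 := by
  have hdot : ∀ z : ι → ℝ, ∑ i, z i ^ 2 = z ⬝ᵥ z := fun z => by simp [dotProduct, sq]
  rw [EuclideanSpace.real_norm_sq_eq, WithLp.ofLp_toLp, hdot, hdot, dotProduct_mulVec,
    ← mulVec_transpose, mulVec_mulVec, hU, one_mulVec]

theorem sq_norm_gaussian_law_eq_sum_gamma_law_general
    {p : ℕ} {Ω Ω' : Type*} [MeasurableSpace Ω] [MeasurableSpace Ω']
    (P : Measure Ω)
    (P' : Measure Ω') [IsProbabilityMeasure P']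
    (lam : Fin p → ℝ) (hlam : ∀ i, 0 < lam i)
    (U : Matrix (Fin p) (Fin p) ℝ) (hU : Uᵀ * U = 1)
    (X : Ω → EuclideanSpace ℝ (Fin p)) (hXmeas : Measurable X)
    (hX : P.map X = (Measure.pi fun i => gaussianReal 0 (lam i).toNNReal).map
      (fun y => (WithLp.toLp 2 (fun k => U.mulVec y k) : EuclideanSpace ℝ (Fin p))))
    (Y : Fin p → Ω' → ℝ) (hYmeas : ∀ i, Measurable (Y i))
    (hYindep : iIndepFun Y P')
    (hYlaw : ∀ i, P'.map (Y i) = gammaMeasure (1/2) (1/(2 * lam i))) :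
    P.map (fun ω => ‖X ω‖ ^ 2) = P'.map (fun ω => ∑ i, Y i ω) := by
  have hrotate : Measurable fun y : Fin p → ℝ => WithLp.toLp 2 (U.mulVec y) := by fun_prop
  have hnormsq : Measurable fun x : EuclideanSpace ℝ (Fin p) => ‖x‖ ^ 2 := by fun_prop
  calc P.map (fun ω => ‖X ω‖ ^ 2)
      = (P.map X).map (fun x => ‖x‖ ^ 2) := (Measure.map_map hnormsq hXmeas).symm
    _ = (Measure.pi fun i => gaussianReal 0 (lam i).toNNReal).map (fun y => ∑ i, y i ^ 2) := by
        rw [hX, Measure.map_map hnormsq hrotate]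
        simp_rw [Function.comp_def, norm_sq_toLp_mulVec_of_transpose_mul_self hU]
    _ = (Measure.pi fun i => gammaMeasure (1/2) (1/(2 * lam i))).map (fun z => ∑ i, z i) := by
        rw [map_sum_sq_pi_gaussianReal fun i => (toNNReal_pos.2 (hlam i)).ne']
        simp_rw [coe_toNNReal _ (hlam _).le]
    _ = P'.map (fun ω => ∑ i, Y i ω) := by
        rw [map_sum_eq_map_sum_pi_of_iIndepFun hYmeas hYindep, funext hYlaw]

/-- Let `Σ` be symmetric positive definite with eigenvalues
`λ₁,…,λ_p > 0` (encoded via an orthogonal `U` with `Σ = U diag(λ) Uᵀ`), and let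
`X ∼ N(0,Σ)` (encoded as the pushforward, under `y ↦ U y`, of the product of the
one-dimensional Gaussians `N(0, λ_i)`).  Then the law of `‖X‖²` equals the law of
`Σ_{i=1}^p Y_i` where the `Y_i` are independent with `Y_i ∼ Gamma(1/2, rate 1/(2 λ_i))`. -/
theorem sq_norm_gaussian_law_eq_sum_gamma_law
    {p : ℕ} {Ω Ω' : Type*} [MeasurableSpace Ω] [MeasurableSpace Ω']
    (P : Measure Ω) [IsProbabilityMeasure P]
    (P' : Measure Ω') [IsProbabilityMeasure P']
    (lam : Fin p → ℝ) (hlam : ∀ i, 0 < lam i)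
    (U : Matrix (Fin p) (Fin p) ℝ) (hU : Uᵀ * U = 1)
    (Sigma : Matrix (Fin p) (Fin p) ℝ) (hSigma : Sigma = U * Matrix.diagonal lam * Uᵀ)
    (X : Ω → EuclideanSpace ℝ (Fin p)) (hXmeas : Measurable X)
    (hX : P.map X = (Measure.pi fun i => gaussianReal 0 (lam i).toNNReal).map
      (fun y => (WithLp.toLp 2 (fun k => U.mulVec y k) : EuclideanSpace ℝ (Fin p))))
    (Y : Fin p → Ω' → ℝ) (hYmeas : ∀ i, Measurable (Y i))
    (hYindep : iIndepFun Y P')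
    (hYlaw : ∀ i, P'.map (Y i) = gammaMeasure (1/2) (1/(2 * lam i))) :
    P.map (fun ω => ‖X ω‖ ^ 2) = P'.map (fun ω => ∑ i, Y i ω) :=
  sq_norm_gaussian_law_eq_sum_gamma_law_general P P' lam hlam U hU X hXmeas hX Y hYmeas hYindep
    hYlaw
end

section
/- Fix integers 1 ≤ p < n, set m* = ⌊(n−p+1)/2⌋ and h = ⌊(n+p+1)/2⌋. Let X = (x₁,…,x_n) be a dataset in ℝ^p in general position (no p+1 points on a common affine hyperplane). Let T assign to every n-point dataset Y in ℝ^p a point T(Y) ∈ ℝ^p, and suppose there is c₂ < ∞ such that ‖T(X*) − T(X)‖ ≤ c₂ for every dataset X* obtained from X by replacing fewer than m* points by arbitrary points. For every dataset Y = (y₁,…,y_n), with d_i(Y) = ‖y_i − T(Y)‖, let ξ_Y : [0,∞) → [0,1] satisfy: (i) #{i : ξ_Y(d_i(Y)) = 1} ≥ h; and (ii) r·ξ_Y(r) ≤ hmed_i(d_i(Y)) + 1.4826·hmad_i(d_i(Y)) for all r ≥ 0, where hmed(y₁,…,y_n) is the h-th order statistic y_{(h)} and hmad(y₁,…,y_n)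 = hmed_i |y_i − hmed_j(y_j)|. Define S_g(Y) = (1/n) Σ_{i=1}^n ξ_Y(d_i(Y))² (y_i − T(Y))(y_i − T(Y))ᵀ. Then there exist constants 0 < L ≤ U < ∞ such that for every dataset X* obtained from X by replacing fewer than m* points, every eigenvalue of S_g(X*) lies in [L, U]. -/
open MeasureTheory

/-- The `h`-th order statistic (1-indexed) of the values `d 0, …, d (n-1)`: the smallest
threshold `t` such that at least `h` of the values are `≤ t`. -/
noncomputable def ordStat {n : ℕ} (d : Fin n → ℝ) (h : ℕ) : ℝ :=
  sInf {t : ℝ | h ≤ {i : Fin n | d i ≤ t}.ncard}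

/-- `hmed`: the variation on the median given by the `hh`-th order statistic. -/
noncomputable def hmed {n : ℕ} (hh : ℕ) (d : Fin n → ℝ) : ℝ :=
  ordStat d hh

/-- `hmad`: the corresponding variation on the median absolute deviation,
`hmad(d) = hmed_i |d_i − hmed_j(d_j)|`. -/
noncomputable def hmad {n : ℕ} (hh : ℕ) (d : Fin n → ℝ) : ℝ :=
  ordStat (fun i => |d i - ordStat d hh|) hh

/-!
Write `S_g(Y)` as the weighted scatter matrix `(1/n) Σ wᵢ² yᵢ yᵢᵀ` with `yᵢ = Yᵢ - T(Y)` and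
`wᵢ = ξ_Y(‖yᵢ‖)`; its eigenvalues lie between the extreme values of `v ↦ (1/n) Σ wᵢ² ⟪v, yᵢ⟫²`
on the unit sphere.

Since fewer than `m*` points are replaced, at least `h` points are clean, and their distances to
`T(Y)` are at most `B = Σ ‖Xᵢ - T(X)‖ + c₂`. Hence `hmed` and `hmad` are at most `B`, and (ii)
bounds every `wᵢ ‖yᵢ‖` by `2.4826 B`, which gives `U`.

At least `h - m* + 1 ≥ p + 1` of the points of weight one are clean. For a set `s` of `p + 1`
points of `X` in general position the differences `Xᵢ - Xⱼ` span `ℝ^p`, so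
`Σ_{i,j ∈ s} ⟪v, Xᵢ - Xⱼ⟫² ≥ ε ‖v‖²`, with `ε > 0` uniform over the finitely many `s`. The unknown
centre `T(Y)` cancels in these differences, and the left side is at most
`2 (p + 1) Σ_{i ∈ s} ⟪v, yᵢ⟫²`, which gives `L`.
-/

open Finset Filter Topology RealInnerProductSpace

section OrderStatistics

variable {n h : ℕ} {d : Fin n → ℝ}

theorem ordStat_le_of_le_ncard (hh : 1 ≤ h) {t : ℝ} (ht : h ≤ {i | d i ≤ t}.ncard) :
    ordStat d h ≤ t := by
  refine csInf_le ⟨-∑ j, |d j|, fun s (hs : h ≤ _) => ?_⟩ ht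
  obtain ⟨i, hi⟩ : {i | d i ≤ s}.Nonempty := Set.nonempty_of_ncard_ne_zero (by omega)
  calc -∑ j, |d j| ≤ -|d i| := neg_le_neg (single_le_sum (fun j _ => abs_nonneg (d j)) (mem_univ i))
    _ ≤ d i := neg_abs_le _
    _ ≤ s := hi

theorem ordStat_nonneg (hd : ∀ i, 0 ≤ d i) (hh : 1 ≤ h) : 0 ≤ ordStat d h := by
  refine Real.sInf_nonneg fun t (ht : h ≤ _) => ?_
  obtain ⟨i, hi⟩ : {i | d i ≤ t}.Nonempty := Set.nonempty_of_ncard_ne_zero (by omega)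
  exact (hd i).trans hi

theorem hmad_le_of_le_ncard (hd : ∀ i, 0 ≤ d i) (hh : 1 ≤ h) {B : ℝ}
    (hB : h ≤ {i | d i ≤ B}.ncard) : hmad h d ≤ B := by
  have hmed_nonneg : 0 ≤ ordStat d h := ordStat_nonneg hd hh
  have hmed_le : ordStat d h ≤ B := ordStat_le_of_le_ncard hh hB
  refine ordStat_le_of_le_ncard hh (hB.trans (Set.ncard_le_ncard fun i (hi : d i ≤ B) => ?_))
  show |d i - ordStat d h| ≤ B
  exact abs_le.2 ⟨by linarith [hd i], by linarith⟩

theorem hmed_add_mul_hmad_le (hd : ∀ i, 0 ≤ d i) (hh : 1 ≤ h) {B c : ℝ} (hc : 0 ≤ c)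
    (hB : h ≤ {i | d i ≤ B}.ncard) : hmed h d + c * hmad h d ≤ B + c * B := by
  gcongr
  exacts [ordStat_le_of_le_ncard hh hB, hmad_le_of_le_ncard hd hh hB]

end OrderStatistics

theorem exists_finset_subset_inter_card_eq {α : Type*} [Fintype α] {A G : Set α} {k : ℕ}
    (hk : k + Fintype.card α ≤ A.ncard + G.ncard) :
    ∃ s : Finset α, (∀ i ∈ s, i ∈ A ∧ i ∈ G) ∧ #s = k := by
  classical
  have hunion := Set.ncard_inter_add_ncard_union A G
  have := Set.ncard_le_card (A ∪ G)
  rw [Nat.card_eq_fintype_card] at this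
  obtain ⟨t, ht, htcard⟩ := Set.exists_subset_card_eq (s := A ∩ G) (n := k) (by omega)
  exact ⟨t.toFinset, fun i hi => ht (Set.mem_toFinset.1 hi),
    by rw [← htcard, Set.ncard_eq_toFinset_card']⟩

theorem sum_product_sub_sq_le {ι : Type*} (s : Finset ι) (c : ι → ℝ) :
    ∑ q ∈ s ×ˢ s, (c q.1 - c q.2) ^ 2 ≤ 2 * #s * ∑ i ∈ s, c i ^ 2 := by
  have h : ∑ q ∈ s ×ˢ s, (c q.1 - c q.2) ^ 2 =
      2 * #s * ∑ i ∈ s, c i ^ 2 - 2 * (∑ i ∈ s, c i) ^ 2 := by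
    have hsq : ∀ i j, (c i - c j) ^ 2 = c i ^ 2 + c j ^ 2 - 2 * c i * c j := fun _ _ => by ring
    simp only [sum_product, hsq, sum_sub_distrib, sum_add_distrib, sum_const, nsmul_eq_mul,
      ← mul_sum, ← sum_mul]
    ring
  rw [h]
  nlinarith [sq_nonneg (∑ i ∈ s, c i)]

theorem exists_pos_mul_norm_sq_le_sum_inner_sq {E κ : Type*} [NormedAddCommGroup E]
    [InnerProductSpace ℝ E] [FiniteDimensional ℝ E] (s : Finset κ) (a : κ → E)
    (ha : ∀ v ≠ 0, ∃ k ∈ s, ⟪v, a k⟫ ≠ 0) :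
    ∃ ε > 0, ∀ v, ε * ‖v‖ ^ 2 ≤ ∑ k ∈ s, ⟪v, a k⟫ ^ 2 := by
  let g : E →ₗ[ℝ] EuclideanSpace ℝ s :=
    (WithLp.linearEquiv 2 ℝ (s → ℝ)).symm.toLinearMap ∘ₗ LinearMap.pi fun k => innerₛₗ ℝ (a k)
  have hg : ∀ v, ‖g v‖ ^ 2 = ∑ k ∈ s, ⟪v, a k⟫ ^ 2 := by
    intro v
    rw [EuclideanSpace.norm_sq_eq, ← Finset.sum_coe_sort s]
    simp [g, real_inner_comm]
  obtain ⟨K, hK, hgK⟩ := g.exists_antilipschitzWith <| LinearMap.ker_eq_bot'.2 fun v hv => by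
    by_contra hv0
    obtain ⟨k, hk, hvk⟩ := ha v hv0
    have hsum : ∑ k ∈ s, ⟪v, a k⟫ ^ 2 = 0 := by rw [← hg, hv, norm_zero, sq, zero_mul]
    exact hvk <| pow_eq_zero_iff two_ne_zero |>.1 <|
      (sum_eq_zero_iff_of_nonneg fun _ _ => sq_nonneg _).1 hsum k hk
  refine ⟨(K ^ 2)⁻¹, by positivity, fun v => ?_⟩
  have hv : ‖v‖ ≤ K * ‖g v‖ := ZeroHomClass.bound_of_antilipschitz g hgK v
  rw [← hg, inv_mul_le_iff₀ (by positivity)]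
  calc ‖v‖ ^ 2 ≤ (K * ‖g v‖) ^ 2 := by gcongr
    _ = _ := by ring

section GeneralPosition

variable {E ι : Type*} [NormedAddCommGroup E] [InnerProductSpace ℝ E] [Finite ι] {p : ℕ}
  {X : ι → E}

theorem exists_inner_sub_ne_zero_of_card_gt
    (hgen : ∀ (u : E) (c : ℝ), u ≠ 0 → {i | ⟪u, X i⟫ = c}.ncard ≤ p)
    {s : Finset ι} (hs : p < #s) {v : E} (hv : v ≠ 0) :
    ∃ q ∈ s ×ˢ s, ⟪v, X q.1 - X q.2⟫ ≠ 0 := by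
  by_contra! hall
  obtain ⟨i₀, hi₀⟩ : s.Nonempty := card_pos.mp (by omega)
  have hsub : (s : Set ι) ⊆ {i | ⟪v, X i⟫ = ⟪v, X i₀⟫} := fun i hi => by
    simpa [inner_sub_right, sub_eq_zero] using hall (i, i₀) (mem_product.2 ⟨hi, hi₀⟩)
  have := (Set.ncard_le_ncard hsub (Set.toFinite _)).trans (hgen v _ hv)
  rw [Set.ncard_coe_finset] at this
  omega

theorem exists_pos_forall_mul_norm_sq_le_sum_inner_sub_sq [FiniteDimensional ℝ E]
    (hgen : ∀ (u : E) (c : ℝ), u ≠ 0 → {i | ⟪u, X i⟫ = c}.ncard ≤ p) :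
    ∃ ε > 0, ∀ s : Finset ι, p < #s →
      ∀ v, ε * ‖v‖ ^ 2 ≤ ∑ q ∈ s ×ˢ s, ⟪v, X q.1 - X q.2⟫ ^ 2 := by
  -- each `s` constrains `ε` only on some `(0, εₛ]`, and there are finitely many `s`
  have hevent : ∀ s : Finset ι, ∀ᶠ ε in 𝓝[>] 0,
      p < #s → ∀ v, ε * ‖v‖ ^ 2 ≤ ∑ q ∈ s ×ˢ s, ⟪v, X q.1 - X q.2⟫ ^ 2 := by
    intro s
    by_cases hs : p < #s
    · obtain ⟨ε, hε, hεs⟩ := exists_pos_mul_norm_sq_le_sum_inner_sq (s ×ˢ s)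
        (fun q => X q.1 - X q.2) fun v hv => exists_inner_sub_ne_zero_of_card_gt hgen hs hv
      filter_upwards [Ioo_mem_nhdsGT hε] with δ hδ _ v
      exact le_trans (by gcongr; exact hδ.2.le) (hεs v)
    · exact Eventually.of_forall fun _ h => absurd h hs
  obtain ⟨ε, hεs, hε⟩ := ((eventually_all.2 hevent).and self_mem_nhdsWithin).exists
  exact ⟨ε, hε, hεs⟩

end GeneralPosition

theorem spectrum_subset_Icc_of_inner_bounds {E : Type*} [NormedAddCommGroup E]
    [InnerProductSpace ℝ E] [FiniteDimensional ℝ E] (f : E →ₗ[ℝ] E) {L U : ℝ}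
    (hL : ∀ v, L * ‖v‖ ^ 2 ≤ ⟪v, f v⟫) (hU : ∀ v, ⟪v, f v⟫ ≤ U * ‖v‖ ^ 2) :
    spectrum ℝ f ⊆ Set.Icc L U := by
  intro t ht
  obtain ⟨v, hv⟩ := (Module.End.HasEigenvalue.of_mem_spectrum ht).exists_hasEigenvector
  have hquad : ⟪v, f v⟫ = t * ‖v‖ ^ 2 := by
    rw [hv.apply_eq_smul, real_inner_smul_right, real_inner_self_eq_norm_sq]
  have hpos : 0 < ‖v‖ ^ 2 := by positivity [hv.2]
  exact ⟨le_of_mul_le_mul_right (hquad ▸ hL v) hpos, le_of_mul_le_mul_right (hquad ▸ hU v) hpos⟩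

section WeightedScatter

variable {E m ι : Type*} [NormedAddCommGroup E] [InnerProductSpace ℝ E] [Fintype m] [Fintype ι]

def weightedScatter (c : ℝ) (w : ι → ℝ) (y : ι → EuclideanSpace ℝ m) : Matrix m m ℝ :=
  Matrix.of fun a b => c * ∑ i, w i ^ 2 * y i a * y i b

theorem inner_toLpLin_weightedScatter [DecidableEq m] (c : ℝ) (w : ι → ℝ)
    (y : ι → EuclideanSpace ℝ m) (v : EuclideanSpace ℝ m) :
    ⟪v, Matrix.toLpLin 2 2 (weightedScatter c w y) v⟫ = c * ∑ i, w i ^ 2 * ⟪v, y i⟫ ^ 2 := by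
  simp only [weightedScatter, Matrix.toLpLin_apply, EuclideanSpace.inner_eq_star_dotProduct,
    Matrix.mulVec, dotProduct, Matrix.of_apply, star_trivial, sq, mul_sum, sum_mul]
  calc _ = ∑ a, ∑ i, ∑ b, c * (w i * w i * y i a * y i b) * v b * v a :=
        sum_congr rfl fun _ _ => sum_comm
    _ = ∑ i, ∑ a, ∑ b, c * (w i * w i * y i a * y i b) * v b * v a := sum_comm
    _ = _ := sum_congr rfl fun _ _ => sum_congr rfl fun _ _ => sum_congr rfl fun _ _ => by ring

theorem sum_sq_mul_inner_sq_le (w : ι → ℝ) (y : ι → E) {K : ℝ} (hw : ∀ i, 0 ≤ w i)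
    (hK : ∀ i, ‖y i‖ * w i ≤ K) (v : E) :
    ∑ i, w i ^ 2 * ⟪v, y i⟫ ^ 2 ≤ Fintype.card ι * (K ^ 2 * ‖v‖ ^ 2) := by
  rw [← nsmul_eq_mul, ← card_univ, ← sum_const]
  refine sum_le_sum fun i _ => ?_
  calc w i ^ 2 * ⟪v, y i⟫ ^ 2 ≤ w i ^ 2 * (‖v‖ * ‖y i‖) ^ 2 := by
        refine mul_le_mul_of_nonneg_left ?_ (sq_nonneg _)
        rw [← sq_abs]
        exact pow_le_pow_left₀ (abs_nonneg _) (abs_real_inner_le_norm v (y i)) 2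
    _ = (‖y i‖ * w i) ^ 2 * ‖v‖ ^ 2 := by ring
    _ ≤ K ^ 2 * ‖v‖ ^ 2 :=
        mul_le_mul_of_nonneg_right
          (pow_le_pow_left₀ (mul_nonneg (norm_nonneg _) (hw i)) (hK i) 2) (sq_nonneg _)

theorem sum_product_inner_sub_sq_le (X y : ι → E) (w : ι → ℝ) (a : E) (s : Finset ι)
    (hs : ∀ i ∈ s, w i = 1 ∧ y i = X i - a) (v : E) :
    ∑ q ∈ s ×ˢ s, ⟪v, X q.1 - X q.2⟫ ^ 2 ≤ 2 * #s * ∑ i, w i ^ 2 * ⟪v, y i⟫ ^ 2 := by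
  have hdiff : ∀ q ∈ s ×ˢ s, ⟪v, X q.1 - X q.2⟫ = ⟪v, y q.1⟫ - ⟪v, y q.2⟫ := by
    intro q hq
    rw [mem_product] at hq
    rw [← inner_sub_right, (hs _ hq.1).2, (hs _ hq.2).2, sub_sub_sub_cancel_right]
  calc ∑ q ∈ s ×ˢ s, ⟪v, X q.1 - X q.2⟫ ^ 2
      = ∑ q ∈ s ×ˢ s, (⟪v, y q.1⟫ - ⟪v, y q.2⟫) ^ 2 := sum_congr rfl fun q hq => by rw [hdiff q hq]
    _ ≤ 2 * #s * ∑ i ∈ s, ⟪v, y i⟫ ^ 2 := sum_product_sub_sq_le s fun i => ⟪v, y i⟫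
    _ = 2 * #s * ∑ i ∈ s, w i ^ 2 * ⟪v, y i⟫ ^ 2 := by
        congr 1
        exact sum_congr rfl fun i hi => by rw [(hs i hi).1, one_pow, one_mul]
    _ ≤ 2 * #s * ∑ i, w i ^ 2 * ⟪v, y i⟫ ^ 2 := by
        gcongr
        exact subset_univ s

theorem spectrum_weightedScatter_subset_Icc [DecidableEq m] {c K ε : ℝ} (hc : 0 ≤ c)
    (w : ι → ℝ) (y X : ι → EuclideanSpace ℝ m) (a : EuclideanSpace ℝ m) (s : Finset ι)
    (hw : ∀ i, 0 ≤ w i) (hK : ∀ i, ‖y i‖ * w i ≤ K) (hs₀ : s.Nonempty)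
    (hs : ∀ i ∈ s, w i = 1 ∧ y i = X i - a)
    (hε : ∀ v, ε * ‖v‖ ^ 2 ≤ ∑ q ∈ s ×ˢ s, ⟪v, X q.1 - X q.2⟫ ^ 2) :
    spectrum ℝ (weightedScatter c w y) ⊆
      Set.Icc (c * ε / (2 * #s)) (c * Fintype.card ι * K ^ 2) := by
  rw [← Matrix.spectrum_toLpLin 2]
  refine spectrum_subset_Icc_of_inner_bounds _ (fun v => ?_) (fun v => ?_) <;>
    rw [inner_toLpLin_weightedScatter]
  · have hcard : (0 : ℝ) < 2 * #s := by positivity [hs₀.card_pos]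
    rw [div_mul_eq_mul_div, div_le_iff₀ hcard, mul_assoc, mul_assoc]
    refine mul_le_mul_of_nonneg_left ?_ hc
    linarith [(hε v).trans (sum_product_inner_sub_sq_le X y w a s hs v)]
  · calc c * ∑ i, w i ^ 2 * ⟪v, y i⟫ ^ 2 ≤ c * (Fintype.card ι * (K ^ 2 * ‖v‖ ^ 2)) := by
          gcongr
          exact sum_sq_mul_inner_sq_le w y hw hK v
      _ = _ := by ring

end WeightedScatter

theorem gsscm_eigenvalues_bounded_under_contamination_general
    (p n : ℕ) (hpn : p < n)
    (X : Fin n → EuclideanSpace ℝ (Fin p))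
    (hgen : ∀ (u : EuclideanSpace ℝ (Fin p)) (c : ℝ), u ≠ 0 →
      {i : Fin n | (inner ℝ u (X i) : ℝ) = c}.ncard ≤ p)
    (T : (Fin n → EuclideanSpace ℝ (Fin p)) → EuclideanSpace ℝ (Fin p))
    (c₂ : ℝ)
    (hT : ∀ Y : Fin n → EuclideanSpace ℝ (Fin p),
      {i : Fin n | Y i ≠ X i}.ncard < (n - p + 1) / 2 → ‖T Y - T X‖ ≤ c₂)
    (ξ : (Fin n → EuclideanSpace ℝ (Fin p)) → ℝ → ℝ)
    (hξ01 : ∀ Y r, ξ Y r ∈ Set.Icc (0 : ℝ) 1)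
    (hξone : ∀ Y : Fin n → EuclideanSpace ℝ (Fin p),
      (n + p + 1) / 2 ≤ {i : Fin n | ξ Y ‖Y i - T Y‖ = 1}.ncard)
    (hξbound : ∀ (Y : Fin n → EuclideanSpace ℝ (Fin p)) (r : ℝ), 0 ≤ r →
      r * ξ Y r ≤ hmed ((n + p + 1) / 2) (fun i => ‖Y i - T Y‖) +
        1.4826 * hmad ((n + p + 1) / 2) (fun i => ‖Y i - T Y‖))
    (Sg : (Fin n → EuclideanSpace ℝ (Fin p)) → Matrix (Fin p) (Fin p) ℝ)
    (hSg : ∀ Y a b, Sg Y a b =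
      (1 / n : ℝ) * ∑ i, ξ Y ‖Y i - T Y‖ ^ 2 * (Y i a - T Y a) * (Y i b - T Y b)) :
    ∃ L U : ℝ, 0 < L ∧ L ≤ U ∧
      ∀ Y : Fin n → EuclideanSpace ℝ (Fin p),
        {i : Fin n | Y i ≠ X i}.ncard < (n - p + 1) / 2 →
        ∀ t ∈ spectrum ℝ (Sg Y), t ∈ Set.Icc L U := by
  obtain ⟨ε, hε, hεX⟩ := exists_pos_forall_mul_norm_sq_le_sum_inner_sub_sq hgen
  set B := ∑ i, ‖X i - T X‖ + c₂
  have hn : (0 : ℝ) < n := by exact_mod_cast hpn.trans_le' (Nat.zero_le p)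
  set L := 1 / n * ε / (2 * (p + 1 : ℕ))
  refine ⟨L, max ((B + 1.4826 * B) ^ 2) L, by positivity, le_max_right _ _, fun Y hY t ht => ?_⟩
  have hbad := Set.ncard_add_ncard_compl {i | Y i ≠ X i}
  simp only [Set.compl_ofPred, not_not, Nat.card_eq_fintype_card, Fintype.card_fin] at hbad
  have hnear : {i | Y i = X i} ⊆ {i | ‖Y i - T Y‖ ≤ B} := fun i (hi : Y i = X i) => by
    show ‖Y i - T Y‖ ≤ B
    calc ‖Y i - T Y‖ ≤ ‖X i - T X‖ + ‖T Y - T X‖ := by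
          rw [hi, norm_sub_rev (T Y)]
          exact norm_sub_le_norm_sub_add_norm_sub _ _ _
      _ ≤ B := add_le_add (single_le_sum (f := fun j => ‖X j - T X‖)
          (fun _ _ => norm_nonneg _) (mem_univ i)) (hT Y hY)
  have hweight : ∀ i, ‖Y i - T Y‖ * ξ Y ‖Y i - T Y‖ ≤ B + 1.4826 * B := fun i =>
    (hξbound Y _ (norm_nonneg _)).trans <| hmed_add_mul_hmad_le (fun _ => norm_nonneg _)
      (by omega) (by norm_num) <| (by omega : _ ≤ {i | Y i = X i}.ncard).trans (Set.ncard_le_ncard hnear)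
  obtain ⟨s, hs, hcard⟩ := exists_finset_subset_inter_card_eq (k := p + 1)
    (A := {i | ξ Y ‖Y i - T Y‖ = 1}) (G := {i | Y i = X i}) (by have := hξone Y; rw [Fintype.card_fin]; omega)
  rw [show Sg Y = weightedScatter (1 / n) (fun i => ξ Y ‖Y i - T Y‖) (fun i => Y i - T Y) from
    Matrix.ext (hSg Y)] at ht
  have hbounds := spectrum_weightedScatter_subset_Icc (by positivity) _ _ X (T Y) s
    (fun i => (hξ01 Y _).1) hweight (card_pos.1 (by omega))
    (fun i hi => ⟨(hs i hi).1, by rw [(hs i hi).2]⟩) (hεX s (by omega)) ht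
  rw [hcard, Fintype.card_fin] at hbounds
  refine ⟨hbounds.1, hbounds.2.trans (le_of_eq_of_le ?_ (le_max_left _ _))⟩
  field_simp

/-- **Part 1 of the breakdown proposition.** Let `1 ≤ p < n`,
`m* = ⌊(n−p+1)/2⌋`, `h = ⌊(n+p+1)/2⌋`, and let `X` be a dataset in `ℝ^p` in general
position.  Let `T` be a location estimator which moves by at most `c₂` when fewer than `m*`
points of `X` are replaced, and for each dataset `Y` let `ξ_Y : [0,∞) → [0,1]` satisfy
(i) `ξ_Y(dᵢ) = 1` for at least `h` indices, and (ii) `r ξ_Y(r) ≤ hmed(dᵢ) + 1.4826 hmad(dᵢ)`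
for all `r ≥ 0`, where `dᵢ = ‖yᵢ − T(Y)‖`.  Then there are constants `0 < L ≤ U < ∞` such
that for every dataset `Y` obtained from `X` by replacing fewer than `m*` points, every
eigenvalue of the GSSCM `S_g(Y)` lies in `[L, U]`. -/
theorem gsscm_eigenvalues_bounded_under_contamination
    (p n : ℕ) (hp : 1 ≤ p) (hpn : p < n)
    (X : Fin n → EuclideanSpace ℝ (Fin p))
    (hgen : ∀ (u : EuclideanSpace ℝ (Fin p)) (c : ℝ), u ≠ 0 →
      {i : Fin n | (inner ℝ u (X i) : ℝ) = c}.ncard ≤ p)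
    (T : (Fin n → EuclideanSpace ℝ (Fin p)) → EuclideanSpace ℝ (Fin p))
    (c₂ : ℝ)
    (hT : ∀ Y : Fin n → EuclideanSpace ℝ (Fin p),
      {i : Fin n | Y i ≠ X i}.ncard < (n - p + 1) / 2 → ‖T Y - T X‖ ≤ c₂)
    (ξ : (Fin n → EuclideanSpace ℝ (Fin p)) → ℝ → ℝ)
    (hξ01 : ∀ Y r, ξ Y r ∈ Set.Icc (0 : ℝ) 1)
    (hξone : ∀ Y : Fin n → EuclideanSpace ℝ (Fin p),
      (n + p + 1) / 2 ≤ {i : Fin n | ξ Y ‖Y i - T Y‖ = 1}.ncard)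
    (hξbound : ∀ (Y : Fin n → EuclideanSpace ℝ (Fin p)) (r : ℝ), 0 ≤ r →
      r * ξ Y r ≤ hmed ((n + p + 1) / 2) (fun i => ‖Y i - T Y‖) +
        1.4826 * hmad ((n + p + 1) / 2) (fun i => ‖Y i - T Y‖))
    (Sg : (Fin n → EuclideanSpace ℝ (Fin p)) → Matrix (Fin p) (Fin p) ℝ)
    (hSg : ∀ Y a b, Sg Y a b =
      (1 / n : ℝ) * ∑ i, ξ Y ‖Y i - T Y‖ ^ 2 * (Y i a - T Y a) * (Y i b - T Y b)) :
    ∃ L U : ℝ, 0 < L ∧ L ≤ U ∧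
      ∀ Y : Fin n → EuclideanSpace ℝ (Fin p),
        {i : Fin n | Y i ≠ X i}.ncard < (n - p + 1) / 2 →
        ∀ t ∈ spectrum ℝ (Sg Y), t ∈ Set.Icc L U :=
  gsscm_eigenvalues_bounded_under_contamination_general p n hpn X hgen T c₂ hT ξ hξ01 hξone hξbound
    Sg hSg
end

section
/- Let x₁,…,x_n ∈ ℝ^p, let 1 ≤ h ≤ n, let θ ∈ ℝ^p, and let I ⊆ {1,…,n} with |I| = h be a set of indices of h points attaining the h smallest Euclidean distances ‖x_i − θ‖ among all n points. Let θ′ = (1/h) Σ_{i∈I} x_i be the mean of those h points. Then the sum of the h smallest values among {‖x_i − θ′‖² : i = 1,…,n} is at most the sum of the h smallest values among {‖x_i − θ‖² : i = 1,…,n}. In other words, the C-step never increases the multivariate least trimmed squares objective θ ↦ Σ_{j=1}^h ‖x_• − θ‖²_{(j)}. -/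
open MeasureTheory

/-- The sum of the `h` smallest values of `v 0, …, v (n-1)`: the minimum, over index sets
`I` of cardinality `h`, of `∑ i ∈ I, v i`. -/
noncomputable def trimmedSum {n : ℕ} (h : ℕ) (v : Fin n → ℝ) : ℝ :=
  sInf {s : ℝ | ∃ I : Finset (Fin n), I.card = h ∧ s = ∑ i ∈ I, v i}

/-!
On the chosen index set `I`, the new centre `θ'` is the mean of the points, so by the
parallel-axis identity `∑_I ‖xᵢ − θ‖² = ∑_I ‖xᵢ − θ'‖² + h ‖θ' − θ‖²` it does at least as well
as `θ` on `I`. The trimmed sum at `θ'` is at most the sum over `I`, while the trimmed sum at `θ`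
equals the sum over `I`, because `I` indexes the `h` smallest distances to `θ`.
-/

open Finset

section SmallestValues

variable {ι M : Type*} [AddCommMonoid M] [PartialOrder M] [IsOrderedCancelAddMonoid M]
  {f : ι → M}

lemma Finset.sum_le_sum_of_card_eq_of_forall_le {s t : Finset ι} (hst : #s = #t)
    (hle : ∀ i ∈ s, ∀ j ∈ t, f i ≤ f j) : ∑ i ∈ s, f i ≤ ∑ j ∈ t, f j := by
  let e := s.equivOfCardEq hst
  calc ∑ i ∈ s, f i = ∑ i : s, f i := (sum_coe_sort s f).symm
    _ ≤ ∑ i : s, f (e i) := sum_le_sum fun i _ => hle i i.2 (e i) (e i).2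
    _ = ∑ j : t, f j := e.sum_comp (fun j => f j)
    _ = ∑ j ∈ t, f j := sum_coe_sort t f

lemma Finset.sum_le_sum_of_card_eq_of_forall_le_compl [DecidableEq ι] {s t : Finset ι}
    (hst : #s = #t) (hle : ∀ i ∈ s, ∀ j ∉ s, f i ≤ f j) :
    ∑ i ∈ s, f i ≤ ∑ j ∈ t, f j := by
  rw [← sum_sdiff_le_sum_sdiff]
  exact sum_le_sum_of_card_eq_of_forall_le (card_sdiff_comm hst)
    fun i hi j hj => hle i (mem_sdiff.1 hi).1 j (mem_sdiff.1 hj).2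

end SmallestValues

section TrimmedSum

variable {n h : ℕ} (v : Fin n → ℝ)

lemma trimmedSum_le_sum {J : Finset (Fin n)} (hJ : #J = h) :
    trimmedSum h v ≤ ∑ i ∈ J, v i := by
  refine csInf_le ?_ ⟨J, hJ, rfl⟩
  refine ((Set.finite_range fun K : Finset (Fin n) => ∑ i ∈ K, v i).subset ?_).bddBelow
  rintro s ⟨K, -, rfl⟩
  exact ⟨K, rfl⟩

lemma trimmedSum_eq_sum_of_forall_le_compl {I : Finset (Fin n)} (hI : #I = h)
    (hle : ∀ i ∈ I, ∀ j ∉ I, v i ≤ v j) : trimmedSum h v = ∑ i ∈ I, v i := by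
  refine IsLeast.csInf_eq ⟨⟨I, hI, rfl⟩, ?_⟩
  rintro s ⟨J, hJ, rfl⟩
  exact sum_le_sum_of_card_eq_of_forall_le_compl (hI.trans hJ.symm) hle

end TrimmedSum

section Mean

variable {ι E : Type*} [NormedAddCommGroup E] [InnerProductSpace ℝ E]

lemma Finset.sum_sub_mean_eq_zero (s : Finset ι) (x : ι → E) :
    ∑ i ∈ s, (x i - (#s : ℝ)⁻¹ • ∑ j ∈ s, x j) = 0 := by
  rcases s.eq_empty_or_nonempty with rfl | hs
  · simp
  have hcard : (#s : ℝ) ≠ 0 := by exact_mod_cast hs.card_pos.ne'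
  rw [sum_sub_distrib, sum_const, ← Nat.cast_smul_eq_nsmul ℝ, smul_smul, mul_inv_cancel₀ hcard,
    one_smul, sub_self]

lemma Finset.sum_norm_sub_sq_eq_of_sum_sub_eq_zero {s : Finset ι} {x : ι → E} {m : E}
    (hm : ∑ i ∈ s, (x i - m) = 0) (θ : E) :
    ∑ i ∈ s, ‖x i - θ‖ ^ 2 = ∑ i ∈ s, ‖x i - m‖ ^ 2 + #s * ‖m - θ‖ ^ 2 := by
  have hsplit : ∀ i, ‖x i - θ‖ ^ 2
      = ‖x i - m‖ ^ 2 + 2 * inner ℝ (x i - m) (m - θ) + ‖m - θ‖ ^ 2 := fun i => by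
    rw [← norm_add_sq_real, sub_add_sub_cancel]
  simp only [hsplit, sum_add_distrib, ← mul_sum, ← sum_inner, hm, inner_zero_left, mul_zero,
    add_zero, sum_const, nsmul_eq_mul]

lemma Finset.sum_norm_sub_sq_le_of_sum_sub_eq_zero {s : Finset ι} {x : ι → E} {m : E}
    (hm : ∑ i ∈ s, (x i - m) = 0) (θ : E) :
    ∑ i ∈ s, ‖x i - m‖ ^ 2 ≤ ∑ i ∈ s, ‖x i - θ‖ ^ 2 := by
  rw [sum_norm_sub_sq_eq_of_sum_sub_eq_zero hm θ]
  exact le_add_of_nonneg_right (by positivity)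

end Mean

theorem cstep_lts_objective_nonincreasing_general
    {p n : ℕ} (x : Fin n → EuclideanSpace ℝ (Fin p))
    (h : ℕ)
    (θ : EuclideanSpace ℝ (Fin p))
    (I : Finset (Fin n)) (hcard : I.card = h)
    (hI : ∀ i ∈ I, ∀ j, j ∉ I → ‖x i - θ‖ ≤ ‖x j - θ‖)
    (θ' : EuclideanSpace ℝ (Fin p)) (hθ' : θ' = (h : ℝ)⁻¹ • ∑ i ∈ I, x i) :
    trimmedSum h (fun i => ‖x i - θ'‖ ^ 2) ≤ trimmedSum h (fun i => ‖x i - θ‖ ^ 2) := by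
  subst hcard hθ'
  have hsmallest : ∀ i ∈ I, ∀ j ∉ I, ‖x i - θ‖ ^ 2 ≤ ‖x j - θ‖ ^ 2 :=
    fun i hi j hj => pow_le_pow_left₀ (norm_nonneg _) (hI i hi j hj) 2
  calc _ ≤ ∑ i ∈ I, ‖x i - (#I : ℝ)⁻¹ • ∑ j ∈ I, x j‖ ^ 2 := trimmedSum_le_sum _ rfl
    _ ≤ ∑ i ∈ I, ‖x i - θ‖ ^ 2 := sum_norm_sub_sq_le_of_sum_sub_eq_zero (I.sum_sub_mean_eq_zero x) θ
    _ = _ := (trimmedSum_eq_sum_of_forall_le_compl _ rfl hsmallest).symm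

/-- **the C-step never increases the LTS objective.** Let `x₁,…,x_n ∈ ℝ^p`,
`1 ≤ h ≤ n`, `θ ∈ ℝ^p`, and let `I` be a set of `h` indices attaining the `h` smallest
Euclidean distances `‖xᵢ − θ‖`.  If `θ'` is the mean of the points indexed by `I`, then the
sum of the `h` smallest values of `‖xᵢ − θ'‖²` is at most the sum of the `h` smallest values
of `‖xᵢ − θ‖²`. -/
theorem cstep_lts_objective_nonincreasing
    {p n : ℕ} (x : Fin n → EuclideanSpace ℝ (Fin p))
    (h : ℕ) (h1 : 1 ≤ h) (hn : h ≤ n)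
    (θ : EuclideanSpace ℝ (Fin p))
    (I : Finset (Fin n)) (hcard : I.card = h)
    (hI : ∀ i ∈ I, ∀ j, j ∉ I → ‖x i - θ‖ ≤ ‖x j - θ‖)
    (θ' : EuclideanSpace ℝ (Fin p)) (hθ' : θ' = (h : ℝ)⁻¹ • ∑ i ∈ I, x i) :
    trimmedSum h (fun i => ‖x i - θ'‖ ^ 2) ≤ trimmedSum h (fun i => ‖x i - θ‖ ^ 2) :=
  cstep_lts_objective_nonincreasing_general x h θ I hcard hI θ' hθ'
end
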